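/- arXiv:2411.15894 — 3 statements merged into one kernel-verified Lean document; each statement's English description precedes it below -/
import Mathlib

section
/- For every real number d ≥ 0 and every constant C₁ > 0, PaCMAP's nearest-neighbor pair loss equals an affine transform of the negative-sampling (NEG) attractive log-term for the kernel q_NN: d/(d+C₁) = 1 + log( q_NN(d) / (1 + q_NN(d)) ). -/
/-! The kernel `q = e / (1 - e)` with `e = exp (-C₁ / (d + C₁))` is the odds of `e`, and
`q / (1 + q)` turns odds back into `e`; so the log-term is `-C₁ / (d + C₁)`, which is
`d / (d + C₁) - 1`. -/

theorem odds_div_one_add_odds {K : Type*} [Field K] {x : K} (hx : x ≠ 1) :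
    x / (1 - x) / (1 + x / (1 - x)) = x := by
  have h : 1 - x ≠ 0 := sub_ne_zero.2 hx.symm
  field_simp
  ring

theorem div_add_eq_one_add_neg_div {K : Type*} [Field K] {a c : K} (h : a + c ≠ 0) :
    a / (a + c) = 1 + -c / (a + c) := by
  field_simp
  ring

/-- PaCMAP's NN-pair loss `d/(d+C₁)` equals an affine transform of the NEG attractive
log-term for the kernel `q_NN(d) = exp(-C₁/(d+C₁)) / (1 - exp(-C₁/(d+C₁)))`. -/
theorem pacmap_nn_loss_eq_neg_log_term (d C₁ : ℝ) (hd : 0 ≤ d) (hC : 0 < C₁) :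
    d / (d + C₁) =
      1 + Real.log
        ((Real.exp (-C₁ / (d + C₁)) / (1 - Real.exp (-C₁ / (d + C₁)))) /
          (1 + Real.exp (-C₁ / (d + C₁)) / (1 - Real.exp (-C₁ / (d + C₁))))) := by
  have hden : d + C₁ ≠ 0 := by positivity
  have hexp : Real.exp (-C₁ / (d + C₁)) ≠ 1 :=
    (Real.exp_eq_one_iff _).not.2 (div_ne_zero (neg_ne_zero.2 hC.ne') hden)
  rw [odds_div_one_add_odds hexp, Real.log_exp, div_add_eq_one_add_neg_div hden]
end

section
/- For every real number d ≥ 0 and every constant C₂ > 0, PaCMAP's further-pair loss equals an affine transform of the negative-sampling (NEG) repulsive log-term for the kernel q_FP: 1/(d+C₂) = (1/C₂) · ( 1 - log( 1 / (1 + q_FP(d)) ) ). -/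
open Real

lemma one_add_one_sub_div_self {K : Type*} [Field K] {x : K} (hx : x ≠ 0) :
    1 + (1 - x) / x = 1 / x := by
  field_simp
  ring

lemma log_one_div_one_add_one_sub_exp_div_exp (u : ℝ) :
    log (1 / (1 + (1 - exp u) / exp u)) = u := by
  rw [one_add_one_sub_div_self (exp_pos u).ne', one_div_one_div, log_exp]

lemma one_div_mul_one_sub_div_add {K : Type*} [Field K] {d c : K} (hc : c ≠ 0)
    (hdc : d + c ≠ 0) : 1 / c * (1 - d / (d + c)) = 1 / (d + c) := by
  field_simp
  ring

/-- PaCMAP's FP-pair loss `1/(d+C₂)` equals an affine transform of the NEG repulsive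
log-term for the kernel `q_FP(d) = (1 - exp(d/(d+C₂))) / exp(d/(d+C₂))`. -/
theorem pacmap_fp_loss_eq_neg_log_term (d C₂ : ℝ) (hd : 0 ≤ d) (hC : 0 < C₂) :
    1 / (d + C₂) =
      (1 / C₂) * (1 - Real.log
        (1 / (1 + (1 - Real.exp (d / (d + C₂))) / Real.exp (d / (d + C₂))))) := by
  rw [log_one_div_one_add_one_sub_exp_div_exp,
    one_div_mul_one_sub_div_add hC.ne' (by positivity)]
end

section
/- Let N, m be positive natural numbers, let d : Fin N → ℝ and e : Fin (m·N) → ℝ be families of nonnegative reals (the NN and FP pair values). Then the total PaCMAP loss equals the corresponding sum of NEG log-terms up to an additive constant: Σ_{i} d(i)/(d(i)+10) + Σ_{j} 1/(e(j)+1) = N + m·N + Σ_{i} log( q_NN(d(i)) / (1 + q_NN(d(i))) ) − Σ_{j} log( 1 / (1 + q_FP(e(j))) ), where q_NN and q_FP are taken with C₁ = 10 and C₂ = 1. -/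
/-!
The kernels are built so that each NEG log-term is an affine function of the corresponding
PaCMAP loss term: `q_NN/(1+q_NN) = exp(-C₁/(d+C₁))` and `1/(1+q_FP) = exp(d/(d+C₂))`, so
`log(q_NN/(1+q_NN)) = d/(d+C₁) - 1` and `log(1/(1+q_FP)) = 1 - 1/(d+C₂)`. Summing over the
`N` NN pairs and the `m·N` FP pairs produces the constants `N` and `m·N`.
-/

/-- PaCMAP NN kernel with `C₁ = 10`. -/
noncomputable def qNN (d : ℝ) : ℝ :=
  Real.exp (-10 / (d + 10)) / (1 - Real.exp (-10 / (d + 10)))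

/-- PaCMAP FP kernel with `C₂ = 1`. -/
noncomputable def qFP (d : ℝ) : ℝ :=
  (1 - Real.exp (d / (d + 1))) / Real.exp (d / (d + 1))

open Real

section Field

variable {K : Type*} [Field K]

theorem div_one_sub_div_one_add_div_one_sub {x : K} (hx : x ≠ 1) :
    x / (1 - x) / (1 + x / (1 - x)) = x := by
  have h : 1 - x ≠ 0 := sub_ne_zero.mpr hx.symm
  field_simp
  ring

theorem one_div_one_add_one_sub_div {y : K} (hy : y ≠ 0) : 1 / (1 + (1 - y) / y) = y := by
  field_simp
  ring

end Field

theorem qNN_div_one_add_qNN {d : ℝ} (hd : d + 10 ≠ 0) :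
    qNN d / (1 + qNN d) = exp (-10 / (d + 10)) := by
  have h : exp (-10 / (d + 10)) ≠ 1 := by
    rw [Ne, exp_eq_one_iff]
    exact div_ne_zero (by norm_num) hd
  exact div_one_sub_div_one_add_div_one_sub h

theorem log_qNN_div_one_add_qNN {d : ℝ} (hd : d + 10 ≠ 0) :
    log (qNN d / (1 + qNN d)) = d / (d + 10) - 1 := by
  rw [qNN_div_one_add_qNN hd, log_exp]
  field_simp
  ring

theorem one_div_one_add_qFP (d : ℝ) : 1 / (1 + qFP d) = exp (d / (d + 1)) :=
  one_div_one_add_one_sub_div (exp_pos _).ne'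

theorem log_one_div_one_add_qFP {d : ℝ} (hd : d + 1 ≠ 0) :
    log (1 / (1 + qFP d)) = 1 - 1 / (d + 1) := by
  rw [one_div_one_add_qFP, log_exp]
  field_simp
  ring

theorem pacmap_loss_eq_neg_loss_general (N m : ℕ)
    (d : Fin N → ℝ) (e : Fin (m * N) → ℝ)
    (hd : ∀ i, 0 ≤ d i) (he : ∀ j, 0 ≤ e j) :
    (∑ i, d i / (d i + 10)) + (∑ j, 1 / (e j + 1)) =
      (N : ℝ) + (m * N : ℝ)
        + (∑ i, Real.log (qNN (d i) / (1 + qNN (d i))))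
        - (∑ j, Real.log (1 / (1 + qFP (e j)))) := by
  have hNN : ∑ i, log (qNN (d i) / (1 + qNN (d i))) = (∑ i, d i / (d i + 10)) - N := by
    rw [Finset.sum_congr rfl fun i _ ↦ log_qNN_div_one_add_qNN (by linarith [hd i])]
    simp [Finset.sum_sub_distrib]
  have hFP : ∑ j, log (1 / (1 + qFP (e j))) = (m * N : ℝ) - ∑ j, 1 / (e j + 1) := by
    rw [Finset.sum_congr rfl fun j _ ↦ log_one_div_one_add_qFP (by linarith [he j])]
    simp [Finset.sum_sub_distrib]
  rw [hNN, hFP]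
  ring

/-- The total PaCMAP loss (with `C₁ = 10`, `C₂ = 1`, `N` NN pairs and `m·N` FP pairs)
equals the corresponding sum of NEG log-terms up to an additive constant. -/
theorem pacmap_loss_eq_neg_loss (N m : ℕ) (hN : 0 < N) (hm : 0 < m)
    (d : Fin N → ℝ) (e : Fin (m * N) → ℝ)
    (hd : ∀ i, 0 ≤ d i) (he : ∀ j, 0 ≤ e j) :
    (∑ i, d i / (d i + 10)) + (∑ j, 1 / (e j + 1)) =
      (N : ℝ) + (m * N : ℝ)
        + (∑ i, Real.log (qNN (d i) / (1 + qNN (d i))))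
        - (∑ j, Real.log (1 / (1 + qFP (e j)))) :=
  pacmap_loss_eq_neg_loss_general N m d e hd he
end
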